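/- If (a1,...,a7) is a hive on the triangle, then setting x = a1+a5+a6-a2-a3-a7, w = a1+a2-a4, u = a3+a6-a4, y = a5+a7-a4, v = min{a3+a4-a6-a1, a4+a5-a2-a7}, t = min{a1+a4-a3-a2, a4+a7-a6-a5}, z = min{a2+a4-a1-a5, a4+a6-a3-a7}, one has x ∈ Z and y, z, t, u, v, w ∈ N, and this assignment is the two-sided inverse of the map from Z × N^6 to hives defined by the explicit formulas a1 = (2t+u+2w+v+max{2x,-x})/3, a2 = (2w+v+2z+y+max{x,-2x})/3, a3 = (2v+w+2u+t+max{x,-2x})/3, a4 = (2v+w+2t+u+2z+y+3|x|)/3, a5 = (2v+w+2y+z+max{2x,-x})/3, a6 = (2z+y+2u+t+max{2x,-x})/3, a7 = (2t+u+2y+z+max{x,-2x})/3. -/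
import Mathlib


/-- A rational number is a nonnegative integer. -/
def IsNonnegInt (q : ℚ) : Prop := ∃ n : ℕ, q = n

/-- The set of SL₃-hives on a triangle: 7-tuples `(a₁,…,a₇)` (indexed here by `Fin 7`,
with `a i` denoting `a_{i+1}`) satisfying the nine rhombus conditions. -/
def IsHive (a : Fin 7 → ℚ) : Prop :=
  IsNonnegInt (a 0 + a 1 - a 3) ∧
  IsNonnegInt (a 2 + a 3 - a 0 - a 5) ∧
  IsNonnegInt (a 3 + a 4 - a 1 - a 6) ∧
  IsNonnegInt (a 4 + a 6 - a 3) ∧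
  IsNonnegInt (a 1 + a 3 - a 0 - a 4) ∧
  IsNonnegInt (a 3 + a 5 - a 2 - a 6) ∧
  IsNonnegInt (a 2 + a 5 - a 3) ∧
  IsNonnegInt (a 3 + a 6 - a 4 - a 5) ∧
  IsNonnegInt (a 0 + a 3 - a 1 - a 2)

/-- The explicit map from web parameters `(x,y,z,t,u,v,w) ∈ ℤ × ℕ⁶` to 7-tuples. -/
def hiveOf (x : ℤ) (y z t u v w : ℕ) : Fin 7 → ℚ :=
  ![(2 * (t : ℚ) + u + 2 * w + v + max (2 * (x : ℚ)) (-(x : ℚ))) / 3,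
    (2 * (w : ℚ) + v + 2 * z + y + max ((x : ℚ)) (-(2 * (x : ℚ)))) / 3,
    (2 * (v : ℚ) + w + 2 * u + t + max ((x : ℚ)) (-(2 * (x : ℚ)))) / 3,
    (2 * (v : ℚ) + w + 2 * t + u + 2 * z + y + 3 * |(x : ℚ)|) / 3,
    (2 * (v : ℚ) + w + 2 * y + z + max (2 * (x : ℚ)) (-(x : ℚ))) / 3,
    (2 * (z : ℚ) + y + 2 * u + t + max (2 * (x : ℚ)) (-(x : ℚ))) / 3,
    (2 * (t : ℚ) + u + 2 * y + z + max ((x : ℚ)) (-(2 * (x : ℚ)))) / 3]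

lemma hive0 (x : ℤ) (y z t u v w : ℕ) :
    hiveOf x y z t u v w 0 = (2 * (t : ℚ) + u + 2 * w + v + max (2 * (x : ℚ)) (-(x : ℚ))) / 3 := rfl
lemma hive1 (x : ℤ) (y z t u v w : ℕ) :
    hiveOf x y z t u v w 1 = (2 * (w : ℚ) + v + 2 * z + y + max ((x : ℚ)) (-(2 * (x : ℚ)))) / 3 := rfl
lemma hive2 (x : ℤ) (y z t u v w : ℕ) :
    hiveOf x y z t u v w 2 = (2 * (v : ℚ) + w + 2 * u + t + max ((x : ℚ)) (-(2 * (x : ℚ)))) / 3 := rfl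
lemma hive3 (x : ℤ) (y z t u v w : ℕ) :
    hiveOf x y z t u v w 3 = (2 * (v : ℚ) + w + 2 * t + u + 2 * z + y + 3 * |(x : ℚ)|) / 3 := rfl
lemma hive4 (x : ℤ) (y z t u v w : ℕ) :
    hiveOf x y z t u v w 4 = (2 * (v : ℚ) + w + 2 * y + z + max (2 * (x : ℚ)) (-(x : ℚ))) / 3 := rfl
lemma hive5 (x : ℤ) (y z t u v w : ℕ) :
    hiveOf x y z t u v w 5 = (2 * (z : ℚ) + y + 2 * u + t + max (2 * (x : ℚ)) (-(x : ℚ))) / 3 := rfl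
lemma hive6 (x : ℤ) (y z t u v w : ℕ) :
    hiveOf x y z t u v w 6 = (2 * (t : ℚ) + u + 2 * y + z + max ((x : ℚ)) (-(2 * (x : ℚ)))) / 3 := rfl


set_option maxHeartbeats 2000000 in
/-- the explicit inverse of the map `hiveOf`. Given a hive `(a₁,…,a₇)`,
the stated formulas produce `x ∈ ℤ` and `y,z,t,u,v,w ∈ ℕ`, and this assignment is a
two-sided inverse of `hiveOf`. -/
theorem hiveOf_inverse :
    (∀ a : Fin 7 → ℚ, IsHive a →
      ∃ (x : ℤ) (y z t u v w : ℕ),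
        (x : ℚ) = a 0 + a 4 + a 5 - a 1 - a 2 - a 6 ∧
        (w : ℚ) = a 0 + a 1 - a 3 ∧
        (u : ℚ) = a 2 + a 5 - a 3 ∧
        (y : ℚ) = a 4 + a 6 - a 3 ∧
        (v : ℚ) = min (a 2 + a 3 - a 5 - a 0) (a 3 + a 4 - a 1 - a 6) ∧
        (t : ℚ) = min (a 0 + a 3 - a 2 - a 1) (a 3 + a 6 - a 5 - a 4) ∧
        (z : ℚ) = min (a 1 + a 3 - a 0 - a 4) (a 3 + a 5 - a 2 - a 6) ∧
        hiveOf x y z t u v w = a) ∧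
    (∀ (x : ℤ) (y z t u v w : ℕ),
      (x : ℚ) = hiveOf x y z t u v w 0 + hiveOf x y z t u v w 4 + hiveOf x y z t u v w 5
          - hiveOf x y z t u v w 1 - hiveOf x y z t u v w 2 - hiveOf x y z t u v w 6 ∧
      (w : ℚ) = hiveOf x y z t u v w 0 + hiveOf x y z t u v w 1 - hiveOf x y z t u v w 3 ∧
      (u : ℚ) = hiveOf x y z t u v w 2 + hiveOf x y z t u v w 5 - hiveOf x y z t u v w 3 ∧
      (y : ℚ) = hiveOf x y z t u v w 4 + hiveOf x y z t u v w 6 - hiveOf x y z t u v w 3 ∧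
      (v : ℚ) = min (hiveOf x y z t u v w 2 + hiveOf x y z t u v w 3
            - hiveOf x y z t u v w 5 - hiveOf x y z t u v w 0)
          (hiveOf x y z t u v w 3 + hiveOf x y z t u v w 4
            - hiveOf x y z t u v w 1 - hiveOf x y z t u v w 6) ∧
      (t : ℚ) = min (hiveOf x y z t u v w 0 + hiveOf x y z t u v w 3
            - hiveOf x y z t u v w 2 - hiveOf x y z t u v w 1)
          (hiveOf x y z t u v w 3 + hiveOf x y z t u v w 6
            - hiveOf x y z t u v w 5 - hiveOf x y z t u v w 4) ∧
      (z : ℚ) = min (hiveOf x y z t u v w 1 + hiveOf x y z t u v w 3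
            - hiveOf x y z t u v w 0 - hiveOf x y z t u v w 4)
          (hiveOf x y z t u v w 3 + hiveOf x y z t u v w 5
            - hiveOf x y z t u v w 2 - hiveOf x y z t u v w 6)) := by
  constructor
  · rintro a ⟨⟨n1, h1⟩, ⟨n2, h2⟩, ⟨n3, h3⟩, ⟨n4, h4⟩, ⟨n5, h5⟩, ⟨n6, h6⟩, ⟨n7, h7⟩,
      ⟨n8, h8⟩, ⟨n9, h9⟩⟩
    refine ⟨(n3 : ℤ) - n2, n4, min n5 n6, min n9 n8, n7, min n2 n3, n1,
      by push_cast; linarith, by linarith, by linarith, by linarith, ?_, ?_, ?_, ?_⟩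
    · have e1 : a 2 + a 3 - a 5 - a 0 = (n2 : ℚ) := by linarith
      have e2 : a 3 + a 4 - a 1 - a 6 = (n3 : ℚ) := by linarith
      rw [e1, e2, Nat.cast_min]
    · have e1 : a 0 + a 3 - a 2 - a 1 = (n9 : ℚ) := by linarith
      have e2 : a 3 + a 6 - a 5 - a 4 = (n8 : ℚ) := by linarith
      rw [e1, e2, Nat.cast_min]
    · have e1 : a 1 + a 3 - a 0 - a 4 = (n5 : ℚ) := by linarith
      have e2 : a 3 + a 5 - a 2 - a 6 = (n6 : ℚ) := by linarith
      rw [e1, e2, Nat.cast_min]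
    · have hX : (((n3 : ℤ) - n2 : ℤ) : ℚ) = (n3 : ℚ) - n2 := by push_cast; ring
      rcases le_total (n2 : ℚ) (n3 : ℚ) with h | h
      · -- x ≥ 0 case
        have hn23 : n2 ≤ n3 := Nat.cast_le.mp h
        have h56 : (n5 : ℚ) ≤ n6 := by linarith
        have h98 : (n8 : ℚ) ≤ n9 := by linarith
        have hv : min n2 n3 = n2 := Nat.min_eq_left hn23
        have hz : min n5 n6 = n5 := Nat.min_eq_left (Nat.cast_le.mp h56)
        have ht : min n9 n8 = n8 := Nat.min_eq_right (Nat.cast_le.mp h98)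
        have hM : max (2 * ((n3 : ℚ) - n2)) (-((n3 : ℚ) - n2)) = 2 * ((n3 : ℚ) - n2) :=
          max_eq_left (by linarith)
        have hm : max ((n3 : ℚ) - n2) (-(2 * ((n3 : ℚ) - n2))) = (n3 : ℚ) - n2 :=
          max_eq_left (by linarith)
        have habs : |(n3 : ℚ) - n2| = (n3 : ℚ) - n2 := abs_of_nonneg (by linarith)
        have g0 := hive0 ((n3 : ℤ) - n2) n4 (min n5 n6) (min n9 n8) n7 (min n2 n3) n1
        have g1 := hive1 ((n3 : ℤ) - n2) n4 (min n5 n6) (min n9 n8) n7 (min n2 n3) n1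
        have g2 := hive2 ((n3 : ℤ) - n2) n4 (min n5 n6) (min n9 n8) n7 (min n2 n3) n1
        have g3 := hive3 ((n3 : ℤ) - n2) n4 (min n5 n6) (min n9 n8) n7 (min n2 n3) n1
        have g4 := hive4 ((n3 : ℤ) - n2) n4 (min n5 n6) (min n9 n8) n7 (min n2 n3) n1
        have g5 := hive5 ((n3 : ℤ) - n2) n4 (min n5 n6) (min n9 n8) n7 (min n2 n3) n1
        have g6 := hive6 ((n3 : ℤ) - n2) n4 (min n5 n6) (min n9 n8) n7 (min n2 n3) n1
        rw [hX, hv, hz, ht] at g0 g1 g2 g3 g4 g5 g6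
        rw [hM] at g0 g4 g5
        rw [hm] at g1 g2 g6
        rw [habs] at g3
        rw [hv, hz, ht]
        funext i
        fin_cases i <;> simp only [Fin.zero_eta, Fin.mk_one, Fin.reduceFinMk]
        · rw [g0]; linarith
        · rw [g1]; linarith
        · rw [g2]; linarith
        · rw [g3]; linarith
        · rw [g4]; linarith
        · rw [g5]; linarith
        · rw [g6]; linarith
      · -- x ≤ 0 case
        have hn32 : n3 ≤ n2 := Nat.cast_le.mp h
        have h56 : (n6 : ℚ) ≤ n5 := by linarith
        have h98 : (n9 : ℚ) ≤ n8 := by linarith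
        have hv : min n2 n3 = n3 := Nat.min_eq_right hn32
        have hz : min n5 n6 = n6 := Nat.min_eq_right (Nat.cast_le.mp h56)
        have ht : min n9 n8 = n9 := Nat.min_eq_left (Nat.cast_le.mp h98)
        have hM : max (2 * ((n3 : ℚ) - n2)) (-((n3 : ℚ) - n2)) = -((n3 : ℚ) - n2) :=
          max_eq_right (by linarith)
        have hm : max ((n3 : ℚ) - n2) (-(2 * ((n3 : ℚ) - n2))) = -(2 * ((n3 : ℚ) - n2)) :=
          max_eq_right (by linarith)
        have habs : |(n3 : ℚ) - n2| = -((n3 : ℚ) - n2) := abs_of_nonpos (by linarith)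
        have g0 := hive0 ((n3 : ℤ) - n2) n4 (min n5 n6) (min n9 n8) n7 (min n2 n3) n1
        have g1 := hive1 ((n3 : ℤ) - n2) n4 (min n5 n6) (min n9 n8) n7 (min n2 n3) n1
        have g2 := hive2 ((n3 : ℤ) - n2) n4 (min n5 n6) (min n9 n8) n7 (min n2 n3) n1
        have g3 := hive3 ((n3 : ℤ) - n2) n4 (min n5 n6) (min n9 n8) n7 (min n2 n3) n1
        have g4 := hive4 ((n3 : ℤ) - n2) n4 (min n5 n6) (min n9 n8) n7 (min n2 n3) n1
        have g5 := hive5 ((n3 : ℤ) - n2) n4 (min n5 n6) (min n9 n8) n7 (min n2 n3) n1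
        have g6 := hive6 ((n3 : ℤ) - n2) n4 (min n5 n6) (min n9 n8) n7 (min n2 n3) n1
        rw [hX, hv, hz, ht] at g0 g1 g2 g3 g4 g5 g6
        rw [hM] at g0 g4 g5
        rw [hm] at g1 g2 g6
        rw [habs] at g3
        rw [hv, hz, ht]
        funext i
        fin_cases i <;> simp only [Fin.zero_eta, Fin.mk_one, Fin.reduceFinMk]
        · rw [g0]; linarith
        · rw [g1]; linarith
        · rw [g2]; linarith
        · rw [g3]; linarith
        · rw [g4]; linarith
        · rw [g5]; linarith
        · rw [g6]; linarith
  · intro x y z t u v w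
    have g0 := hive0 x y z t u v w
    have g1 := hive1 x y z t u v w
    have g2 := hive2 x y z t u v w
    have g3 := hive3 x y z t u v w
    have g4 := hive4 x y z t u v w
    have g5 := hive5 x y z t u v w
    have g6 := hive6 x y z t u v w
    rcases le_total (0 : ℚ) (x : ℚ) with hx | hx
    · rw [max_eq_left (by linarith : -(x : ℚ) ≤ 2 * x)] at g0 g4 g5
      rw [max_eq_left (by linarith : -(2 * (x : ℚ)) ≤ x)] at g1 g2 g6
      rw [abs_of_nonneg hx] at g3
      refine ⟨?_, ?_, ?_, ?_, ?_, ?_, ?_⟩ <;>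
        simp only [g0, g1, g2, g3, g4, g5, g6]
      · ring
      · ring
      · ring
      · ring
      · rw [min_def]; split_ifs <;> linarith
      · rw [min_def]; split_ifs <;> linarith
      · rw [min_def]; split_ifs <;> linarith
    · rw [max_eq_right (by linarith : 2 * (x : ℚ) ≤ -x)] at g0 g4 g5
      rw [max_eq_right (by linarith : (x : ℚ) ≤ -(2 * x))] at g1 g2 g6
      rw [abs_of_nonpos hx] at g3
      refine ⟨?_, ?_, ?_, ?_, ?_, ?_, ?_⟩ <;>
        simp only [g0, g1, g2, g3, g4, g5, g6]
      · ring
      · ring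
      · ring
      · ring
      · rw [min_def]; split_ifs <;> linarith
      · rw [min_def]; split_ifs <;> linarith
      · rw [min_def]; split_ifs <;> linarith
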